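/- For every integer n ≥ 1, the balanced circuits of the biased graph K^osc(n) are precisely the oscillating circuits of K_n with its usual vertex ordering on [n]. -/

import Mathlib

open SimpleGraph

namespace Paper

variable {V : Type*}

/-- The edge set of a walk, as a set of edges. -/
def walkEdges {G : SimpleGraph V} {x y : V} (p : G.Walk x y) : Set (Sym2 V) :=
  {e | e ∈ p.edges}

/-- `C` is a circuit of `G`, i.e. the edge set of a cycle of `G`. -/
def IsCircuit (G : SimpleGraph V) (C : Set (Sym2 V)) : Prop :=
  ∃ (v : V) (w : G.Walk v v), w.IsCycle ∧ C = walkEdges w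

/-- The set of vertices covered by a set of edges. -/
def circVerts (C : Set (Sym2 V)) : Set V := {v | ∃ e ∈ C, v ∈ e}

/-- An edge set is nonspanning if it misses some vertex. -/
def Nonspanning (C : Set (Sym2 V)) : Prop := circVerts C ≠ Set.univ

/-- Three pairwise edge-disjoint and internally vertex-disjoint `x`-`y` paths,
forming a theta subgraph. -/
def IsThetaConfig (G : SimpleGraph V) {x y : V} (p₁ p₂ p₃ : G.Walk x y) : Prop :=
  x ≠ y ∧ p₁.IsPath ∧ p₂.IsPath ∧ p₃.IsPath ∧
  (∀ e, e ∈ p₁.edges → e ∉ p₂.edges) ∧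
  (∀ e, e ∈ p₁.edges → e ∉ p₃.edges) ∧
  (∀ e, e ∈ p₂.edges → e ∉ p₃.edges) ∧
  (∀ v, v ∈ p₁.support → v ∈ p₂.support → v = x ∨ v = y) ∧
  (∀ v, v ∈ p₁.support → v ∈ p₃.support → v = x ∨ v = y) ∧
  (∀ v, v ∈ p₂.support → v ∈ p₃.support → v = x ∨ v = y)

/-- No theta subgraph of `G` contains exactly two circuits of `B`: the three
circuits of a theta subgraph are the unions of pairs of its three paths. -/
def ThetaProperty (G : SimpleGraph V) (B : Set (Set (Sym2 V))) : Prop :=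
  ∀ ⦃x y : V⦄ (p₁ p₂ p₃ : G.Walk x y), IsThetaConfig G p₁ p₂ p₃ →
    ¬ ((walkEdges p₁ ∪ walkEdges p₂ ∈ B ∧ walkEdges p₁ ∪ walkEdges p₃ ∈ B ∧
          walkEdges p₂ ∪ walkEdges p₃ ∉ B) ∨
       (walkEdges p₁ ∪ walkEdges p₂ ∈ B ∧ walkEdges p₁ ∪ walkEdges p₃ ∉ B ∧
          walkEdges p₂ ∪ walkEdges p₃ ∈ B) ∨
       (walkEdges p₁ ∪ walkEdges p₂ ∉ B ∧ walkEdges p₁ ∪ walkEdges p₃ ∈ B ∧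
          walkEdges p₂ ∪ walkEdges p₃ ∈ B))

/-- `(G, B)` is a biased graph. -/
def IsBiased (G : SimpleGraph V) (B : Set (Set (Sym2 V))) : Prop :=
  (∀ C ∈ B, IsCircuit G C) ∧ ThetaProperty G B

/-- The subgraph of `G` induced on the vertex set `X` (kept on the same vertex type). -/
def inducedOn (G : SimpleGraph V) (X : Set V) : SimpleGraph V where
  Adj u v := G.Adj u v ∧ u ∈ X ∧ v ∈ X
  symm := ⟨fun u v h => ⟨h.1.symm, h.2.2, h.2.1⟩⟩
  loopless := ⟨fun u h => G.irrefl h.1⟩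

/-- The gain of a walk with respect to a gain function `γ` (an antisymmetric
function recording an orientation together with a group labelling). -/
def walkGain {Γ : Type*} [Group Γ] (γ : V → V → Γ) {G : SimpleGraph V}
    {x y : V} (p : G.Walk x y) : Γ :=
  (p.darts.map fun d => γ d.toProd.1 d.toProd.2).prod

/-- `(G, B)` arises from a `Γ`-labelled graph: some orientation and `Γ`-labelling of `G`
(encoded as an antisymmetric gain function) whose balanced circuits are exactly `B`. -/
def ArisesFrom (G : SimpleGraph V) (B : Set (Set (Sym2 V))) (Γ : Type*) [Group Γ] : Prop :=
  ∃ γ : V → V → Γ, (∀ u v, γ u v * γ v u = 1) ∧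
    ∀ (v : V) (w : G.Walk v v), w.IsCycle → (walkEdges w ∈ B ↔ walkGain γ w = 1)

/-- `(G, B)` arises from a `Γ`-labelled graph for some finite cyclic group `Γ`. -/
def ArisesFromFiniteCyclic (G : SimpleGraph V) (B : Set (Set (Sym2 V))) : Prop :=
  ∃ (Γ : Type) (instΓ : Group Γ), Finite Γ ∧ (letI := instΓ; IsCyclic Γ ∧ ArisesFrom G B Γ)

/-- The edge set of the cycle visiting the entries of the list `L` in cyclic order. -/
def cycEdges (L : List V) : Set (Sym2 V) :=
  {e | ∃ i : Fin L.length,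
    e = s(L.get i, L.get ⟨(i.val + 1) % L.length, Nat.mod_lt _ i.pos⟩)}

section Ordered

variable [LinearOrder V]

/-- The edge set `{v₁v₂, v₂v₃, v₃v₄, v₄v₁}` of a 4-circuit. -/
def Circ4 (v₁ v₂ v₃ v₄ : V) : Set (Sym2 V) := {s(v₁, v₂), s(v₂, v₃), s(v₃, v₄), s(v₄, v₁)}

/-- A 1324-circuit: the canonical ordering `v₁,v₂,v₃,v₄` satisfies `v₁<v₃<v₂<v₄`. -/
def Is1324 (C : Set (Sym2 V)) : Prop :=
  ∃ v₁ v₂ v₃ v₄ : V, v₁ < v₃ ∧ v₃ < v₂ ∧ v₂ < v₄ ∧ C = Circ4 v₁ v₂ v₃ v₄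

/-- A 1243-circuit: the canonical ordering `v₁,v₂,v₃,v₄` satisfies `v₁<v₂<v₄<v₃`. -/
def Is1243 (C : Set (Sym2 V)) : Prop :=
  ∃ v₁ v₂ v₃ v₄ : V, v₁ < v₂ ∧ v₂ < v₄ ∧ v₄ < v₃ ∧ C = Circ4 v₁ v₂ v₃ v₄

/-- A circuit is oscillating if every vertex is either below both of its neighbours
in the circuit or above both of them. -/
def Oscillating (C : Set (Sym2 V)) : Prop :=
  ∀ ⦃v a b : V⦄, s(v, a) ∈ C → s(v, b) ∈ C → a ≠ b → (v < a ∧ v < b) ∨ (a < v ∧ b < v)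

/-- The number of increasing steps of a walk minus the number of decreasing steps;
for a cycle walk `w` this is `δ₀` of the corresponding circuit, and `(walkDelta w).natAbs`
is the parameter `δ`. -/
def walkDelta {G : SimpleGraph V} {x y : V} (p : G.Walk x y) : ℤ :=
  ((p.darts.filter fun d => d.toProd.1 < d.toProd.2).length : ℤ) -
  ((p.darts.filter fun d => d.toProd.2 < d.toProd.1).length : ℤ)

/-- The gain of a walk with respect to the edge labelling `γ` and the orientation of
the complete graph in which each edge is oriented from its smaller end to its larger end. -/
def upGain {Γ : Type*} [Group Γ] (γ : Sym2 V → Γ) {G : SimpleGraph V}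
    {x y : V} (p : G.Walk x y) : Γ :=
  (p.darts.map fun d =>
    if d.toProd.1 < d.toProd.2 then γ s(d.toProd.1, d.toProd.2)
    else (γ s(d.toProd.1, d.toProd.2))⁻¹).prod

/-- `T` is the edge set of a theta subgraph of `G`. -/
def IsTheta (G : SimpleGraph V) (T : Set (Sym2 V)) : Prop :=
  ∃ (x y : V) (p₁ p₂ p₃ : G.Walk x y), IsThetaConfig G p₁ p₂ p₃ ∧
    T = walkEdges p₁ ∪ walkEdges p₂ ∪ walkEdges p₃

/-- Adjacency in the graph `Ω(G)`: a theta subgraph contains both circuits together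
with a 1243- or 1324-circuit. -/
def OmegaAdj (G : SimpleGraph V) (C₁ C₂ : Set (Sym2 V)) : Prop :=
  C₁ ≠ C₂ ∧ ∃ T, IsTheta G T ∧ C₁ ⊆ T ∧ C₂ ⊆ T ∧ ∃ D, (Is1243 D ∨ Is1324 D) ∧ D ⊆ T

/-- The graph `Ω(G)` on the nonspanning circuits of `G`. -/
def Omega (G : SimpleGraph V) :
    SimpleGraph {C : Set (Sym2 V) // IsCircuit G C ∧ Nonspanning C} where
  Adj C₁ C₂ := OmegaAdj G C₁.1 C₂.1
  symm := by
    constructor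
    rintro C₁ C₂ ⟨hne, T, hT, h1, h2, hD⟩
    exact ⟨hne.symm, T, hT, h2, h1, hD⟩
  loopless := by
    constructor
    rintro C ⟨hne, -⟩
    exact hne rfl

/-- Two circuits are similar if the order-preserving bijection between their vertex
sets carries one to the other. -/
def Similar (C₁ C₂ : Set (Sym2 V)) : Prop :=
  ∃ φ : V → V, Set.BijOn φ (circVerts C₁) (circVerts C₂) ∧
    StrictMonoOn φ (circVerts C₁) ∧ C₂ = Sym2.map φ '' C₁

end Ordered

/-- The 4-uniform Ramsey property for `N` with target sizes `a, b, c, d`. -/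
def HasRamsey4 (N a b c d : ℕ) : Prop :=
  ∀ χ : Finset (Fin N) → Fin 4, ∃ (i : Fin 4) (X : Finset (Fin N)),
    X.card = ![a, b, c, d] i ∧ ∀ Q ⊆ X, Q.card = 4 → χ Q = i

/-- The 4-colour Ramsey number for 4-uniform hypergraphs. -/
noncomputable def R4 (a b c d : ℕ) : ℕ := sInf {N | HasRamsey4 N a b c d}

end Paper

/-!
Since the label of an edge depends only on its larger end, write `γ s(a, b) = g b` for `a < b`.
The gain of a cycle is then `∏ u, g u ^ e u`, where `e u = [pred u < u] - [succ u < u]` lies in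
`{-1, 0, 1}` and vanishes exactly when `u` is below or above both of its neighbours. Since `g` is
injective on non-minimal vertices and no two subsets of `S` have the same product, a trivial gain
forces `{u | e u = 1} = {u | e u = -1}`, so both sets are empty.
-/

namespace SimpleGraph.Walk

variable {V : Type*} {G : SimpleGraph V}

theorem IsCycle.mem_edges_start_iff {u a : V} {c : G.Walk u u} (hc : c.IsCycle) :
    s(u, a) ∈ c.edges ↔ a = c.snd ∨ a = c.penultimate := by
  rw [← adj_toSubgraph_iff_mem_edges, ← Subgraph.mem_neighborSet,
    hc.neighborSet_toSubgraph_endpoint]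
  rfl

variable [LinearOrder V]

def climbsTo {x y : V} (p : G.Walk x y) (u : V) : ℕ :=
  p.darts.countP fun d => d.fst < d.snd ∧ d.snd = u

def descendsFrom {x y : V} (p : G.Walk x y) (u : V) : ℕ :=
  p.darts.countP fun d => d.snd < d.fst ∧ d.fst = u

def gainExponent {x y : V} (p : G.Walk x y) (u : V) : ℤ :=
  p.climbsTo u - p.descendsFrom u

theorem gainExponent_cons {x y z : V} (h : G.Adj x y) (p : G.Walk y z) (u : V) :
    (cons h p).gainExponent u =
      ((if x < y ∧ y = u then 1 else 0) - (if y < x ∧ x = u then 1 else 0)) +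
        p.gainExponent u := by
  simp only [gainExponent, climbsTo, descendsFrom, darts_cons, List.countP_cons,
    decide_eq_true_eq]
  split_ifs <;> push_cast <;> ring

theorem climbsTo_reverse {x y : V} (p : G.Walk x y) (u : V) :
    p.reverse.climbsTo u = p.descendsFrom u := by
  simp [climbsTo, descendsFrom, darts_reverse, List.countP_map, Function.comp_def]

theorem descendsFrom_reverse {x y : V} (p : G.Walk x y) (u : V) :
    p.reverse.descendsFrom u = p.climbsTo u := by
  simpa using (climbsTo_reverse p.reverse u).symm

theorem gainExponent_rotate {v u : V} (c : G.Walk v v) (h : u ∈ c.support) (x : V) :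
    (c.rotate u h).gainExponent x = c.gainExponent x := by
  have hperm := (c.rotate_darts u h).perm
  simp only [gainExponent, climbsTo, descendsFrom, hperm.countP_eq]

theorem gainExponent_eq_zero_of_notMem_support {x y u : V} (p : G.Walk x y)
    (hu : u ∉ p.support) : p.gainExponent u = 0 := by
  have hin : p.climbsTo u = 0 := List.countP_eq_zero.mpr fun d hd hdu =>
    hu ((of_decide_eq_true hdu).2 ▸ p.dart_snd_mem_support_of_mem_darts hd)
  have hout : p.descendsFrom u = 0 := List.countP_eq_zero.mpr fun d hd hdu =>
    hu ((of_decide_eq_true hdu).2 ▸ p.dart_fst_mem_support_of_mem_darts hd)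
  simp [gainExponent, hin, hout]

theorem exists_lt_of_gainExponent_ne_zero {x y u : V} {p : G.Walk x y}
    (hu : p.gainExponent u ≠ 0) : ∃ a, a < u := by
  by_contra! hmin
  have hin : p.climbsTo u = 0 := List.countP_eq_zero.mpr fun d _ hdu => by
    obtain ⟨hlt, rfl⟩ := of_decide_eq_true hdu
    exact (hmin _).not_gt hlt
  have hout : p.descendsFrom u = 0 := List.countP_eq_zero.mpr fun d _ hdu => by
    obtain ⟨hlt, rfl⟩ := of_decide_eq_true hdu
    exact (hmin _).not_gt hlt
  simp [gainExponent, hin, hout] at hu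

theorem IsPath.climbsTo_start {u y : V} {q : G.Walk u y} (hq : q.IsPath) :
    q.climbsTo u = 0 := by
  have hu : u ∉ q.support.tail :=
    (List.nodup_cons.mp (q.cons_tail_support ▸ hq.support_nodup)).1
  refine List.countP_eq_zero.mpr fun d hd hdu => hu ?_
  have hd' := List.mem_map_of_mem (f := (·.snd)) hd
  rw [map_snd_darts] at hd'
  exact (of_decide_eq_true hdu).2 ▸ hd'

theorem IsPath.descendsFrom_start {u y : V} {q : G.Walk u y} (hq : q.IsPath)
    (hnil : ¬ q.Nil) : q.descendsFrom u = if q.snd < u then 1 else 0 := by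
  cases q with
  | nil => exact (hnil Nil.nil).elim
  | cons h r =>
    have hu : u ∉ r.support := ((cons_isPath_iff h r).mp hq).2
    have hr : r.darts.countP (fun d => d.snd < d.fst ∧ d.fst = u) = 0 :=
      List.countP_eq_zero.mpr fun d hd hdu =>
        hu ((of_decide_eq_true hdu).2 ▸ r.dart_fst_mem_support_of_mem_darts hd)
    rw [descendsFrom, darts_cons, List.countP_cons, hr]
    simp

theorem IsCycle.gainExponent_start {u : V} {c : G.Walk u u} (hc : c.IsCycle) :
    c.gainExponent u =
      (if c.penultimate < u then 1 else 0) - (if c.snd < u then 1 else 0) := by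
  cases c with
  | nil => exact (hc.not_nil Nil.nil).elim
  | @cons _ x _ h p =>
    have hp : p.IsPath := ((cons_isCycle_iff p h).mp hc).1
    have hnil : ¬ p.Nil := not_nil_of_ne h.ne.symm
    have hnil' : ¬ p.reverse.Nil := by simpa using hnil
    rw [gainExponent_cons, gainExponent, ← descendsFrom_reverse p, ← climbsTo_reverse p,
      hp.reverse.climbsTo_start, hp.reverse.descendsFrom_start hnil', snd_reverse,
      penultimate_cons_of_not_nil h p hnil, snd_cons]
    simp [h.ne.symm]
    ring

theorem IsCycle.exists_gainExponent_eq {v u : V} {w : G.Walk v v} (hw : w.IsCycle)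
    (hu : u ∈ w.support) :
    ∃ a b, a ≠ b ∧ (∀ x, s(u, x) ∈ w.edges ↔ x = a ∨ x = b) ∧
      w.gainExponent u = (if b < u then 1 else 0) - (if a < u then 1 else 0) := by
  have hc := hw.rotate hu
  refine ⟨(w.rotate u hu).snd, (w.rotate u hu).penultimate, hc.snd_ne_penultimate,
    fun x => ?_, ?_⟩
  · rw [← (w.rotate_edges u hu).mem_iff, hc.mem_edges_start_iff]
  · rw [← gainExponent_rotate w hu, hc.gainExponent_start]

theorem IsCycle.gainExponent_mem {v : V} {w : G.Walk v v} (hw : w.IsCycle) (u : V) :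
    w.gainExponent u = -1 ∨ w.gainExponent u = 0 ∨ w.gainExponent u = 1 := by
  by_cases hu : u ∈ w.support
  · obtain ⟨a, b, -, -, he⟩ := hw.exists_gainExponent_eq hu
    rw [he]
    split_ifs <;> simp
  · exact .inr (.inl (w.gainExponent_eq_zero_of_notMem_support hu))

theorem IsCycle.gainExponent_eq_zero_iff {v u : V} {w : G.Walk v v} (hw : w.IsCycle)
    (hu : u ∈ w.support) :
    w.gainExponent u = 0 ↔ ∀ ⦃a b⦄, s(u, a) ∈ w.edges → s(u, b) ∈ w.edges → a ≠ b →
      (u < a ∧ u < b) ∨ (a < u ∧ b < u) := by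
  obtain ⟨a, b, hab, hN, he⟩ := hw.exists_gainExponent_eq hu
  have ha : a ≠ u := (w.adj_of_mem_edges ((hN a).2 (.inl rfl))).ne.symm
  have hb : b ≠ u := (w.adj_of_mem_edges ((hN b).2 (.inr rfl))).ne.symm
  have hturn : ((if b < u then 1 else 0) - (if a < u then 1 else 0) : ℤ) = 0 ↔
      (u < a ∧ u < b) ∨ (a < u ∧ b < u) := by
    rcases ha.lt_or_gt with ha | ha <;> rcases hb.lt_or_gt with hb | hb <;>
      simp [ha, hb, ha.not_gt, hb.not_gt]
  rw [he, hturn]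
  refine ⟨fun h p q hp hq hpq => ?_,
    fun h => h ((hN a).2 (.inl rfl)) ((hN b).2 (.inr rfl)) hab⟩
  rcases (hN p).1 hp with rfl | rfl <;> rcases (hN q).1 hq with rfl | rfl <;>
    first | exact absurd rfl hpq | tauto

end SimpleGraph.Walk

namespace Paper

open SimpleGraph.Walk

section DistinctSubsetProducts

variable {ι Γ : Type*} [CommGroup Γ]

def DistinctSubsetProducts (S : Finset Γ) : Prop :=
  ∀ A B : Finset Γ, A ⊆ S → B ⊆ S → A.prod id = B.prod id → A = B

theorem DistinctSubsetProducts.eq_of_prod_eq [DecidableEq ι] {S : Finset Γ}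
    (hS : DistinctSubsetProducts S) {g : ι → Γ} {A B : Finset ι}
    (hg : Set.InjOn g ↑(A ∪ B)) (hgS : ∀ i ∈ A ∪ B, g i ∈ S)
    (h : ∏ i ∈ A, g i = ∏ i ∈ B, g i) : A = B := by
  classical
  have hA : Set.InjOn g A := hg.mono (by simp)
  have hB : Set.InjOn g B := hg.mono (by simp)
  have himage : A.image g = B.image g := by
    refine hS _ _ ?_ ?_ ?_
    · exact Finset.image_subset_iff.2 fun i hi => hgS i (Finset.mem_union_left B hi)
    · exact Finset.image_subset_iff.2 fun i hi => hgS i (Finset.mem_union_right A hi)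
    · rw [Finset.prod_image hA, Finset.prod_image hB]
      exact h
  have himage' : g '' A = g '' B := by
    simpa using congrArg (fun s : Finset Γ => (s : Set Γ)) himage
  exact_mod_cast (hg.image_eq_image_iff (by simp) (by simp)).1 himage'

theorem DistinctSubsetProducts.eq_zero_of_prod_zpow_eq_one [Fintype ι] {S : Finset Γ}
    (hS : DistinctSubsetProducts S) {g : ι → Γ} {e : ι → ℤ}
    (he : ∀ i, e i = -1 ∨ e i = 0 ∨ e i = 1) (hg : Set.InjOn g {i | e i ≠ 0})
    (hgS : ∀ i, e i ≠ 0 → g i ∈ S) (h : ∏ i, g i ^ e i = 1) : e = 0 := by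
  classical
  set A := Finset.univ.filter (e · = 1)
  set B := Finset.univ.filter (e · = -1)
  have hsupp : ∀ i ∈ A ∪ B, e i ≠ 0 := by
    intro i hi
    simp only [A, B, Finset.mem_union, Finset.mem_filter] at hi
    omega
  have hsplit : ∏ i, g i ^ e i = (∏ i ∈ A, g i) / ∏ i ∈ B, g i := by
    rw [Finset.prod_filter, Finset.prod_filter, ← Finset.prod_div_distrib]
    refine Finset.prod_congr rfl fun i _ => ?_
    rcases he i with hi | hi | hi <;> simp [hi]
  have hAB : A = B := hS.eq_of_prod_eq (hg.mono hsupp) (fun i hi => hgS i (hsupp i hi))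
    (div_eq_one.mp (hsplit ▸ h))
  funext i
  have hA : i ∈ A ↔ e i = 1 := by simp [A]
  have hB : i ∈ B ↔ e i = -1 := by simp [B]
  rw [hAB, hB] at hA
  rcases he i with hi | hi | hi <;> simp_all

end DistinctSubsetProducts

variable {V : Type*} [LinearOrder V] {G : SimpleGraph V}

theorem upGain_eq_prod_zpow [Fintype V] {Γ : Type*} [CommGroup Γ] (γ : Sym2 V → Γ)
    (g : V → Γ) (hg : ∀ a b, a < b → γ s(a, b) = g b) {x y : V} (p : G.Walk x y) :
    upGain γ p = ∏ u, g u ^ p.gainExponent u := by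
  induction p with
  | nil => simp [upGain, gainExponent, climbsTo, descendsFrom]
  | @cons x y z h p ih =>
    have hstep : (if x < y then γ s(x, y) else (γ s(x, y))⁻¹) =
        ∏ u, g u ^ ((if x < y ∧ y = u then 1 else 0) -
          (if y < x ∧ x = u then 1 else 0) : ℤ) := by
      rcases h.ne.lt_or_gt with hxy | hyx
      · simp [hxy, hxy.not_gt, hg x y hxy]
      · rw [Sym2.eq_swap, hg y x hyx]
        simp [hyx, hyx.not_gt]
    have hcons : upGain γ (Walk.cons h p) =
        (if x < y then γ s(x, y) else (γ s(x, y))⁻¹) * upGain γ p := by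
      simp [upGain]
    simp only [hcons, hstep, ih, gainExponent_cons, zpow_add, Finset.prod_mul_distrib]

theorem oscillating_iff_gainExponent_eq_zero {v : V} {w : G.Walk v v} (hw : w.IsCycle) :
    Oscillating (walkEdges w) ↔ ∀ u, w.gainExponent u = 0 := by
  refine ⟨fun hosc u => ?_, fun h u a b ha hb hab => ?_⟩
  · by_cases hu : u ∈ w.support
    · exact (hw.gainExponent_eq_zero_iff hu).2 fun a b ha hb hab => hosc ha hb hab
    · exact w.gainExponent_eq_zero_of_notMem_support hu
  · exact (hw.gainExponent_eq_zero_iff (w.fst_mem_support_of_mem_edges ha)).1 (h u) ha hb hab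

theorem upGain_eq_one_iff_oscillating [Fintype V] {Γ : Type*} [CommGroup Γ] {S : Finset Γ}
    (hS : DistinctSubsetProducts S) {γ : Sym2 V → Γ} {g : V → Γ}
    (hg : ∀ a b, a < b → γ s(a, b) = g b) (hgS : ∀ u, (∃ a, a < u) → g u ∈ S)
    (hginj : Set.InjOn g {u | ∃ a, a < u}) {v : V} {w : G.Walk v v} (hw : w.IsCycle) :
    upGain γ w = 1 ↔ Oscillating (walkEdges w) := by
  rw [upGain_eq_prod_zpow γ g hg, oscillating_iff_gainExponent_eq_zero hw]
  refine ⟨fun h => congrFun ?_, fun h => by simp [h]⟩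
  exact hS.eq_zero_of_prod_zpow_eq_one hw.gainExponent_mem
    (hginj.mono fun u hu => exists_lt_of_gainExponent_ne_zero hu)
    (fun u hu => hgS u (exists_lt_of_gainExponent_ne_zero hu)) h

theorem statement4_general (n : ℕ) (hn : 1 ≤ n) (Γ : Type) [CommGroup Γ]
    (S : Finset Γ)
    (hSprod : ∀ A B : Finset Γ, A ⊆ S → B ⊆ S → A.prod id = B.prod id → A = B)
    (γ : Sym2 (Fin n) → Γ)
    (hγS : ∀ u v : Fin n, u ≠ v → γ s(u, v) ∈ S)
    (hγ : ∀ a b c d : Fin n, a < b → c < d → (γ s(a, b) = γ s(c, d) ↔ b = d)) :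
    ∀ (v : Fin n) (w : (completeGraph (Fin n)).Walk v v), w.IsCycle →
      (upGain γ w = 1 ↔ Oscillating (walkEdges w)) := by
  intro v w hw
  let z : Fin n := ⟨0, hn⟩
  have hz : ∀ {a b : Fin n}, a < b → z < b := fun {a _} hab =>
    lt_of_le_of_lt (Nat.zero_le a.val) hab
  refine upGain_eq_one_iff_oscillating (g := fun u => γ s(z, u)) hSprod
    (fun a b hab => ((hγ z b a b (hz hab) hab).2 rfl).symm)
    (fun u ⟨a, ha⟩ => hγS z u (hz ha).ne) ?_ hw
  rintro u ⟨a, ha⟩ u' ⟨a', ha'⟩ h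
  exact (hγ z u z u' (hz ha) (hz ha')).1 h

/-- the balanced circuits of `K^osc(n)` are exactly the oscillating circuits.
Here the labelling of the upward orientation of `K_n` assigns elements of a set `S`
(no two subsets of which have equal products) to the edges so that two edges get the same
label iff they have the same larger end. -/
theorem statement4 (n : ℕ) (hn : 1 ≤ n) (Γ : Type) [CommGroup Γ] [IsCyclic Γ]
    (S : Finset Γ) (hScard : S.card = n * (n - 1) / 2)
    (hSprod : ∀ A B : Finset Γ, A ⊆ S → B ⊆ S → A.prod id = B.prod id → A = B)
    (γ : Sym2 (Fin n) → Γ)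
    (hγS : ∀ u v : Fin n, u ≠ v → γ s(u, v) ∈ S)
    (hγ : ∀ a b c d : Fin n, a < b → c < d → (γ s(a, b) = γ s(c, d) ↔ b = d)) :
    ∀ (v : Fin n) (w : (completeGraph (Fin n)).Walk v v), w.IsCycle →
      (upGain γ w = 1 ↔ Oscillating (walkEdges w)) :=
  statement4_general n hn Γ S hSprod γ hγS hγ

end Paper
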